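/- (Flat-space version of Lemma 2.) Let H, σ : ℝ³ → M₃(ℝ) be smooth symmetric trace-free matrix fields and ω, a : ℝ³ → ℝ³ smooth vector fields satisfying pointwise the purely magnetic equations [σ,H] = 3Hω, div H = 0, curl H = −2 a∧H, and H = curl σ + (Dω)^ + 2 a⊗̂ω. Set C = curl σ and P = (Dω)^ + 2 a⊗̂ω. Then pointwise (1/2) Tr H² = Tr C² − Tr P² and Tr C² − 3 Tr P² = 2⟨C,P⟩. -/

import Mathlib

open Matrix BigOperators
open scoped RealInnerProductSpace

noncomputable section

/-- Vectors in ℝ³. -/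
abbrev V3 := Fin 3 → ℝ

/-- 3×3 real matrices. -/
abbrev M3 := Matrix (Fin 3) (Fin 3) ℝ

/-- The Levi-Civita symbol on three indices. -/
def eps (a b c : Fin 3) : ℝ :=
  if (a, b, c) = (0, 1, 2) ∨ (a, b, c) = (1, 2, 0) ∨ (a, b, c) = (2, 0, 1) then 1
  else if (a, b, c) = (0, 2, 1) ∨ (a, b, c) = (2, 1, 0) ∨ (a, b, c) = (1, 0, 2) then -1
  else 0

/-- The Frobenius inner product ⟨A,B⟩ = Σ_{i,j} A_{ij} B_{ij}. -/
def frob (A B : M3) : ℝ := ∑ i, ∑ j, A i j * B i j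

/-- The Euclidean inner product on ℝ³. -/
def dot3 (v w : V3) : ℝ := ∑ a, v a * w a

/-- The generalized vector product of two 3×3 matrices:
    [A,B]_a = Σ_{b,c} ε_{abc} (AB)_{bc}. -/
def mcross (A B : M3) : V3 := fun a => ∑ b, ∑ c, eps a b c * (A * B) b c

/-- v ∧ B : (v∧B)_{ab} = ½ Σ_{c,d} (ε_{acd} v_c B_{db} + ε_{bcd} v_c B_{da}). -/
def vwedge (v : V3) (B : M3) : M3 := fun a b =>
  (1 / 2 : ℝ) * ∑ c, ∑ d, (eps a c d * v c * B d b + eps b c d * v c * B d a)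

/-- The tensor product (a⊗ω)_{ij} = a_i ω_j. -/
def tens (a ω : V3) : M3 := fun i j => a i * ω j

/-- The trace-free symmetric part X^ = ½(X+Xᵀ) − (1/3)(Tr X)·I. -/
def hat (X : M3) : M3 := (1 / 2 : ℝ) • (X + Xᵀ) - ((1 / 3 : ℝ) * X.trace) • (1 : M3)

/-- The partial derivative ∂_c f at x of a scalar field f : ℝ³ → ℝ. -/
def pd (c : Fin 3) (f : V3 → ℝ) (x : V3) : ℝ := fderiv ℝ f x (Pi.single c 1)

/-- The curl of a matrix field:
    (curl A)_{ab} = ½ Σ_{c,d} (ε_{acd} ∂_c A_{db} + ε_{bcd} ∂_c A_{da}). -/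
def curlM (A : V3 → M3) (x : V3) : M3 := fun a b =>
  (1 / 2 : ℝ) * ∑ c, ∑ d,
    (eps a c d * pd c (fun y => A y d b) x + eps b c d * pd c (fun y => A y d a) x)

/-- The divergence of a vector field: div w = Σ_a ∂_a w_a. -/
def divV (w : V3 → V3) (x : V3) : ℝ := ∑ a, pd a (fun y => w y a) x

/-- The divergence of a matrix field: (div A)_b = Σ_a ∂_a A_{ab}. -/
def divM (A : V3 → M3) (x : V3) : V3 := fun b => ∑ a, pd a (fun y => A y a b) x

/-- The Jacobian matrix field (Dw)_{ab} = ∂_a w_b. -/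
def jac (w : V3 → V3) (x : V3) : M3 := fun a b => pd a (fun y => w y b) x

lemma eps_000 : eps 0 0 0 = 0 := by unfold eps; rw [if_neg (by decide), if_neg (by decide)]
lemma eps_001 : eps 0 0 1 = 0 := by unfold eps; rw [if_neg (by decide), if_neg (by decide)]
lemma eps_002 : eps 0 0 2 = 0 := by unfold eps; rw [if_neg (by decide), if_neg (by decide)]
lemma eps_010 : eps 0 1 0 = 0 := by unfold eps; rw [if_neg (by decide), if_neg (by decide)]
lemma eps_011 : eps 0 1 1 = 0 := by unfold eps; rw [if_neg (by decide), if_neg (by decide)]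
lemma eps_012 : eps 0 1 2 = 1 := by unfold eps; rw [if_pos (by decide)]
lemma eps_020 : eps 0 2 0 = 0 := by unfold eps; rw [if_neg (by decide), if_neg (by decide)]
lemma eps_021 : eps 0 2 1 = -1 := by unfold eps; rw [if_neg (by decide), if_pos (by decide)]
lemma eps_022 : eps 0 2 2 = 0 := by unfold eps; rw [if_neg (by decide), if_neg (by decide)]
lemma eps_100 : eps 1 0 0 = 0 := by unfold eps; rw [if_neg (by decide), if_neg (by decide)]
lemma eps_101 : eps 1 0 1 = 0 := by unfold eps; rw [if_neg (by decide), if_neg (by decide)]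
lemma eps_102 : eps 1 0 2 = -1 := by unfold eps; rw [if_neg (by decide), if_pos (by decide)]
lemma eps_110 : eps 1 1 0 = 0 := by unfold eps; rw [if_neg (by decide), if_neg (by decide)]
lemma eps_111 : eps 1 1 1 = 0 := by unfold eps; rw [if_neg (by decide), if_neg (by decide)]
lemma eps_112 : eps 1 1 2 = 0 := by unfold eps; rw [if_neg (by decide), if_neg (by decide)]
lemma eps_120 : eps 1 2 0 = 1 := by unfold eps; rw [if_pos (by decide)]
lemma eps_121 : eps 1 2 1 = 0 := by unfold eps; rw [if_neg (by decide), if_neg (by decide)]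
lemma eps_122 : eps 1 2 2 = 0 := by unfold eps; rw [if_neg (by decide), if_neg (by decide)]
lemma eps_200 : eps 2 0 0 = 0 := by unfold eps; rw [if_neg (by decide), if_neg (by decide)]
lemma eps_201 : eps 2 0 1 = 1 := by unfold eps; rw [if_pos (by decide)]
lemma eps_202 : eps 2 0 2 = 0 := by unfold eps; rw [if_neg (by decide), if_neg (by decide)]
lemma eps_210 : eps 2 1 0 = -1 := by unfold eps; rw [if_neg (by decide), if_pos (by decide)]
lemma eps_211 : eps 2 1 1 = 0 := by unfold eps; rw [if_neg (by decide), if_neg (by decide)]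
lemma eps_212 : eps 2 1 2 = 0 := by unfold eps; rw [if_neg (by decide), if_neg (by decide)]
lemma eps_220 : eps 2 2 0 = 0 := by unfold eps; rw [if_neg (by decide), if_neg (by decide)]
lemma eps_221 : eps 2 2 1 = 0 := by unfold eps; rw [if_neg (by decide), if_neg (by decide)]
lemma eps_222 : eps 2 2 2 = 0 := by unfold eps; rw [if_neg (by decide), if_neg (by decide)]

/-! ### Helper lemmas -/

lemma pd_sum {ι : Type*} (s : Finset ι) (f : ι → V3 → ℝ) (c : Fin 3) (x : V3)
    (hf : ∀ i ∈ s, DifferentiableAt ℝ (f i) x) :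
    pd c (fun y => ∑ i ∈ s, f i y) x = ∑ i ∈ s, pd c (f i) x := by
  unfold pd
  rw [fderiv_fun_sum hf]
  simp

lemma pd_mul {f g : V3 → ℝ} (c : Fin 3) (x : V3) (hf : DifferentiableAt ℝ f x)
    (hg : DifferentiableAt ℝ g x) :
    pd c (fun y => f y * g y) x = pd c f x * g x + f x * pd c g x := by
  unfold pd
  rw [fderiv_fun_mul hf hg]
  simp only [ContinuousLinearMap.add_apply, ContinuousLinearMap.smul_apply, smul_eq_mul]
  ring

lemma pd_cmul {f : V3 → ℝ} (k : ℝ) (c : Fin 3) (x : V3) (hf : DifferentiableAt ℝ f x) :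
    pd c (fun y => k * f y) x = k * pd c f x := by
  unfold pd
  rw [fderiv_const_mul hf]
  simp

lemma pd_congr {f g : V3 → ℝ} (c : Fin 3) (x : V3) (h : ∀ y, f y = g y) :
    pd c f x = pd c g x := by rw [funext h]

lemma frob_add_right (M N K : M3) : frob M (N + K) = frob M N + frob M K := by
  simp [frob, Matrix.add_apply, mul_add, Finset.sum_add_distrib]

lemma frob_smul_right (k : ℝ) (M N : M3) : frob M (k • N) = k * frob M N := by
  simp [frob, Matrix.smul_apply, Finset.mul_sum]
  congr 1; funext i; congr 1; funext j; ring

lemma frob_comm (M N : M3) : frob M N = frob N M := by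
  simp [frob, mul_comm]

lemma trace_mul_frob (M N : M3) (hM : Mᵀ = M) : (M * N).trace = frob M N := by
  have hM' : ∀ i j, M i j = M j i := fun i j => by simpa using (congrFun (congrFun hM j) i)
  simp only [Matrix.trace, Matrix.diag, Matrix.mul_apply, frob]
  rw [Finset.sum_comm]
  apply Finset.sum_congr rfl; intro i _
  apply Finset.sum_congr rfl; intro j _
  rw [hM' i j, mul_comm]

lemma hat_symm (X : M3) : (hat X)ᵀ = hat X := by
  ext i j
  simp [hat, Matrix.transpose_apply, Matrix.add_apply, Matrix.sub_apply, Matrix.smul_apply,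
    Matrix.one_apply]
  by_cases h : i = j <;> simp [h, eq_comm] <;> ring

lemma curlM_symm (A : V3 → M3) (x : V3) : (curlM A x)ᵀ = curlM A x := by
  ext i j
  simp only [curlM, Matrix.transpose_apply]
  congr 1
  apply Finset.sum_congr rfl; intro c _
  apply Finset.sum_congr rfl; intro d _
  ring

lemma frob_hat (M X : M3) (hM : Mᵀ = M) (hMt : M.trace = 0) : frob M (hat X) = frob M X := by
  have hM' : ∀ i j, M i j = M j i := fun i j => by simpa using (congrFun (congrFun hM j) i)
  have ht : M 0 0 + M 1 1 + M 2 2 = 0 := by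
    simpa [Matrix.trace, Matrix.diag, Fin.sum_univ_three] using hMt
  simp [frob, hat, Matrix.sub_apply, Matrix.smul_apply, Matrix.add_apply,
    Matrix.transpose_apply, Matrix.one_apply, Fin.sum_univ_three, smul_eq_mul]
  linear_combination (X 1 0 - X 0 1) / 2 * (hM' 0 1) + (X 2 0 - X 0 2) / 2 * (hM' 0 2) +
    (X 2 1 - X 1 2) / 2 * (hM' 1 2) - (X.trace/3) * ht

lemma frob_add_left (M N K : M3) : frob (M + N) K = frob M K + frob N K := by
  rw [frob_comm, frob_add_right, frob_comm K M, frob_comm K N]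

/-- flat-space version of Lemma 2: with C = curl σ and
    P = (Dω)^ + 2 a⊗̂ω, one has ½ Tr H² = Tr C² − Tr P² and
    Tr C² − 3 Tr P² = 2⟨C,P⟩. -/
theorem stmt_11 (H σ : V3 → M3) (ω a : V3 → V3)
    (hH : ∀ i j, ContDiff ℝ (⊤ : ℕ∞) fun x => H x i j)
    (hσ : ∀ i j, ContDiff ℝ (⊤ : ℕ∞) fun x => σ x i j)
    (hω : ∀ i, ContDiff ℝ (⊤ : ℕ∞) fun x => ω x i)
    (ha : ∀ i, ContDiff ℝ (⊤ : ℕ∞) fun x => a x i)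
    (hHsym : ∀ x, (H x)ᵀ = H x) (hHtf : ∀ x, (H x).trace = 0)
    (hσsym : ∀ x, (σ x)ᵀ = σ x) (hσtf : ∀ x, (σ x).trace = 0)
    (hbi1 : ∀ x, mcross (σ x) (H x) = (3 : ℝ) • (H x).mulVec (ω x))
    (hbi2 : ∀ x, divM H x = 0)
    (hbi3 : ∀ x, curlM H x = -(2 : ℝ) • vwedge (a x) (H x))
    (hRicci : ∀ x, H x = curlM σ x + hat (jac ω x) + (2 : ℝ) • hat (tens (a x) (ω x))) :
    ∀ x,
      (1 / 2 : ℝ) * (H x * H x).trace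
        = (curlM σ x * curlM σ x).trace
          - ((hat (jac ω x) + (2 : ℝ) • hat (tens (a x) (ω x)))
              * (hat (jac ω x) + (2 : ℝ) • hat (tens (a x) (ω x)))).trace
      ∧ (curlM σ x * curlM σ x).trace
          - 3 * ((hat (jac ω x) + (2 : ℝ) • hat (tens (a x) (ω x)))
              * (hat (jac ω x) + (2 : ℝ) • hat (tens (a x) (ω x)))).trace
        = 2 * frob (curlM σ x) (hat (jac ω x) + (2 : ℝ) • hat (tens (a x) (ω x))) := by
  intro x
  obtain ⟨Pm, hPm⟩ : ∃ Pm : M3, Pm = hat (jac ω x) + (2 : ℝ) • hat (tens (a x) (ω x)) :=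
    ⟨_, rfl⟩
  rw [← hPm]
  have hPsym : Pmᵀ = Pm := by
    rw [hPm, Matrix.transpose_add, Matrix.transpose_smul, hat_symm, hat_symm]
  have hCsym := curlM_symm σ x
  have hHx : H x = curlM σ x + Pm := by rw [hRicci x, hPm, add_assoc]
  have star : frob (H x) (curlM σ x) = 3 * frob (H x) Pm := by
    have dH' : ∀ i j, Differentiable ℝ (fun y => H y i j) :=
      fun i j => (hH i j).differentiable (by simp)
    have dσ' : ∀ i j, Differentiable ℝ (fun y => σ y i j) :=
      fun i j => (hσ i j).differentiable (by simp)
    have dω' : ∀ i, Differentiable ℝ (fun y => ω y i) :=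
      fun i => (hω i).differentiable (by simp)
    have hHe : ∀ (y : V3) (i j : Fin 3), H y i j = H y j i := fun y i j =>
      (Matrix.transpose_apply (H y) j i).symm.trans (congrFun (congrFun (hHsym y) j) i)
    have hσe : ∀ (y : V3) (i j : Fin 3), σ y i j = σ y j i := fun y i j =>
      (Matrix.transpose_apply (σ y) j i).symm.trans (congrFun (congrFun (hσsym y) j) i)
    have pσs : ∀ (c k l : Fin 3), pd c (fun y => σ y k l) x = pd c (fun y => σ y l k) x :=
      fun c k l => pd_congr c x (fun y => hσe y k l)
    have pHs : ∀ (c k l : Fin 3), pd c (fun y => H y k l) x = pd c (fun y => H y l k) x :=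
      fun c k l => pd_congr c x (fun y => hHe y k l)
    have hGpd : ∀ c : Fin 3,
        pd c (fun y => ∑ i, ∑ k, ∑ l, eps i c k * (H y i l * σ y k l)) x
          = ∑ i, ∑ k, ∑ l, eps i c k *
              (pd c (fun y => H y i l) x * σ x k l + H x i l * pd c (fun y => σ y k l) x) := by
      intro c
      rw [pd_sum]
      · apply Finset.sum_congr rfl; intro i _
        rw [pd_sum]
        · apply Finset.sum_congr rfl; intro k _
          rw [pd_sum]
          · apply Finset.sum_congr rfl; intro l _
            rw [pd_cmul _ _ _ ((dH' i l x).fun_mul (dσ' k l x)), pd_mul _ _ (dH' i l x) (dσ' k l x)]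
          · intro l _; exact ((dH' i l x).fun_mul (dσ' k l x)).const_mul _
        · intro k _
          exact DifferentiableAt.fun_sum fun l _ => ((dH' i l x).fun_mul (dσ' k l x)).const_mul _
      · intro i _
        exact DifferentiableAt.fun_sum fun k _ =>
          DifferentiableAt.fun_sum fun l _ => ((dH' i l x).fun_mul (dσ' k l x)).const_mul _
    have hGval : ∀ c : Fin 3,
        (fun y => ∑ i, ∑ k, ∑ l, eps i c k * (H y i l * σ y k l))
          = (fun y => 3 * ∑ k, H y c k * ω y k) := by
      intro c
      funext y
      have h1 := congrFun (hbi1 y) c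
      simp only [mcross, Matrix.mul_apply, Pi.smul_apply, Matrix.mulVec, dotProduct,
        smul_eq_mul, Fin.sum_univ_three] at h1
      have e10 := hHe y 1 0; have e20 := hHe y 2 0; have e21 := hHe y 2 1
      fin_cases c <;>
      · simp only [Fin.mk_zero, Fin.mk_one, Fin.reduceFinMk] at h1 ⊢
        simp only [Fin.sum_univ_three]
        simp only [eps_000, eps_001, eps_002, eps_010, eps_011, eps_012, eps_020, eps_021, eps_022, eps_100, eps_101, eps_102, eps_110, eps_111, eps_112, eps_120, eps_121, eps_122, eps_200, eps_201, eps_202, eps_210, eps_211, eps_212, eps_220, eps_221, eps_222] at h1 ⊢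
        simp only [e10, e20, e21] at h1 ⊢
        linear_combination h1
    have hGval2 : ∀ c : Fin 3,
        pd c (fun y => 3 * ∑ k, H y c k * ω y k) x
          = 3 * ∑ k, (pd c (fun y => H y c k) x * ω x k
              + H x c k * pd c (fun y => ω y k) x) := by
      intro c
      rw [pd_cmul _ _ _ (DifferentiableAt.fun_sum fun k _ => (dH' c k x).fun_mul (dω' k x))]
      congr 1
      rw [pd_sum _ _ _ _ fun k _ => (dH' c k x).fun_mul (dω' k x)]
      exact Finset.sum_congr rfl fun k _ => pd_mul _ _ (dH' c k x) (dω' k x)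
    have EQ : (∑ c : Fin 3, ∑ i, ∑ k, ∑ l, eps i c k *
          (pd c (fun y => H y i l) x * σ x k l + H x i l * pd c (fun y => σ y k l) x))
        = ∑ c : Fin 3, 3 * ∑ k, (pd c (fun y => H y c k) x * ω x k
            + H x c k * pd c (fun y => ω y k) x) :=
      Finset.sum_congr rfl fun c _ => by
        rw [← hGpd c, hGval c]; exact hGval2 c
    have hEQ' : - frob (σ x) (curlM H x) + frob (H x) (curlM σ x)
        = ∑ c : Fin 3, ∑ i, ∑ k, ∑ l, eps i c k *
            (pd c (fun y => H y i l) x * σ x k l + H x i l * pd c (fun y => σ y k l) x) := by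
      simp only [frob, curlM, Fin.sum_univ_three]
      simp only [eps_000, eps_001, eps_002, eps_010, eps_011, eps_012, eps_020, eps_021, eps_022, eps_100, eps_101, eps_102, eps_110, eps_111, eps_112, eps_120, eps_121, eps_122, eps_200, eps_201, eps_202, eps_210, eps_211, eps_212, eps_220, eps_221, eps_222]
      simp only [pσs 0 1 0, pσs 1 1 0, pσs 2 1 0, pσs 0 2 0, pσs 1 2 0, pσs 2 2 0,
        pσs 0 2 1, pσs 1 2 1, pσs 2 2 1, pHs 0 1 0, pHs 1 1 0, pHs 2 1 0,
        pHs 0 2 0, pHs 1 2 0, pHs 2 2 0, pHs 0 2 1, pHs 1 2 1, pHs 2 2 1,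
        hHe x 1 0, hHe x 2 0, hHe x 2 1, hσe x 1 0, hσe x 2 0, hσe x 2 1]
      ring
    have m1 : ∀ c, mcross (σ x) (H x) c
        = 3 * (H x c 0 * ω x 0 + H x c 1 * ω x 1 + H x c 2 * ω x 2) := fun c => by
      have h1 := congrFun (hbi1 x) c
      simpa [Matrix.mulVec, dotProduct, Fin.sum_univ_three] using h1
    have hws : frob (σ x) (vwedge (a x) (H x))
        = -(a x 0 * mcross (σ x) (H x) 0 + a x 1 * mcross (σ x) (H x) 1
            + a x 2 * mcross (σ x) (H x) 2) := by
      simp only [frob, vwedge, mcross, Matrix.mul_apply, Fin.sum_univ_three]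
      simp only [eps_000, eps_001, eps_002, eps_010, eps_011, eps_012, eps_020, eps_021, eps_022, eps_100, eps_101, eps_102, eps_110, eps_111, eps_112, eps_120, eps_121, eps_122, eps_200, eps_201, eps_202, eps_210, eps_211, eps_212, eps_220, eps_221, eps_222]
      simp only [hHe x 1 0, hHe x 2 0, hHe x 2 1, hσe x 1 0, hσe x 2 0, hσe x 2 1]
      ring
    have hcurlHσ : frob (σ x) (curlM H x)
        = 6 * (a x 0 * (H x 0 0 * ω x 0 + H x 0 1 * ω x 1 + H x 0 2 * ω x 2)
            + a x 1 * (H x 1 0 * ω x 0 + H x 1 1 * ω x 1 + H x 1 2 * ω x 2)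
            + a x 2 * (H x 2 0 * ω x 0 + H x 2 1 * ω x 1 + H x 2 2 * ω x 2)) := by
      rw [hbi3 x, frob_smul_right, hws, m1 0, m1 1, m1 2]
      ring
    have hdiv : ∀ k : Fin 3, pd 0 (fun y => H y 0 k) x + pd 1 (fun y => H y 1 k) x
        + pd 2 (fun y => H y 2 k) x = 0 := fun k => by
      have h1 := congrFun (hbi2 x) k
      simpa [divM, Fin.sum_univ_three] using h1
    have hR : (∑ c : Fin 3, 3 * ∑ k, (pd c (fun y => H y c k) x * ω x k
          + H x c k * pd c (fun y => ω y k) x))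
        = 3 * ∑ c : Fin 3, ∑ k, H x c k * pd c (fun y => ω y k) x := by
      simp only [Fin.sum_univ_three]
      linear_combination 3 * ω x 0 * hdiv 0 + 3 * ω x 1 * hdiv 1 + 3 * ω x 2 * hdiv 2
    have hPfrob : frob (H x) Pm
        = (∑ c : Fin 3, ∑ k, H x c k * pd c (fun y => ω y k) x)
          + 2 * (a x 0 * (H x 0 0 * ω x 0 + H x 0 1 * ω x 1 + H x 0 2 * ω x 2)
            + a x 1 * (H x 1 0 * ω x 0 + H x 1 1 * ω x 1 + H x 1 2 * ω x 2)
            + a x 2 * (H x 2 0 * ω x 0 + H x 2 1 * ω x 1 + H x 2 2 * ω x 2)) := by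
      rw [hPm, frob_add_right, frob_smul_right, frob_hat _ _ (hHsym x) (hHtf x),
        frob_hat _ _ (hHsym x) (hHtf x)]
      simp only [frob, jac, tens, Fin.sum_univ_three]
      ring
    linear_combination hEQ' + EQ + hR + hcurlHσ - 3 * hPfrob
  have e1 : (H x * H x).trace = frob (H x) (H x) := trace_mul_frob _ _ (hHsym x)
  have e2 : (curlM σ x * curlM σ x).trace = frob (curlM σ x) (curlM σ x) :=
    trace_mul_frob _ _ hCsym
  have e3 : (Pm * Pm).trace = frob Pm Pm := trace_mul_frob _ _ hPsym
  have e4 : frob (H x) (H x)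
      = frob (curlM σ x) (curlM σ x) + frob (curlM σ x) Pm
        + (frob (curlM σ x) Pm + frob Pm Pm) := by
    nth_rewrite 1 [hHx]
    nth_rewrite 1 [hHx]
    rw [frob_add_left, frob_add_right, frob_add_right, frob_comm Pm (curlM σ x)]
  have e5 : frob (H x) (curlM σ x) = frob (curlM σ x) (curlM σ x) + frob (curlM σ x) Pm := by
    nth_rewrite 1 [hHx]
    rw [frob_add_left, frob_comm Pm (curlM σ x)]
  have e6 : frob (H x) Pm = frob (curlM σ x) Pm + frob Pm Pm := by
    nth_rewrite 1 [hHx]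
    rw [frob_add_left]
  have e7 : frob (curlM σ x) Pm
      = frob (curlM σ x) (hat (jac ω x) + (2 : ℝ) • hat (tens (a x) (ω x))) := by rw [hPm]
  constructor <;> linarith
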